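/- Let γ be a pure covariance matrix of n modes (i.e., γ = S Sᵀ for some S ∈ Sp(2n,ℝ)) whose 2×2 main diagonal blocks are of the form (b_k+1)·I₂ for k = 1,…,n, where b_k ≥ 0. Then for every j = 1,…,n one has b_j ≤ Σ_{k≠j} b_k; that is, no single b_j can exceed the sum of all the others. -/

import Mathlib

open Matrix Finset ComplexOrder

/-- The standard symplectic form on `2n` modes: block diagonal with
`n` blocks `[[0,1],[-1,0]]`. -/
def OmegaMat (n : ℕ) : Matrix (Fin (2*n)) (Fin (2*n)) ℝ :=
  fun i j =>
    if i.val % 2 = 0 ∧ j.val = i.val + 1 then 1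
    else if j.val % 2 = 0 ∧ i.val = j.val + 1 then -1
    else 0

/-- Membership in the real symplectic group `Sp(2n, ℝ)`. -/
def IsSymplectic {n : ℕ} (S : Matrix (Fin (2*n)) (Fin (2*n)) ℝ) : Prop :=
  S * OmegaMat n * S.transpose = OmegaMat n

/-- The Williamson diagonal matrix `diag(d₁,d₁,…,d_n,d_n)`. -/
def sympDiag {n : ℕ} (d : Fin n → ℝ) : Matrix (Fin (2*n)) (Fin (2*n)) ℝ :=
  Matrix.diagonal (fun i => d ⟨i.val / 2, by have := i.isLt; omega⟩)

/-- `γ` has symplectic eigenvalues `(d₁,…,d_n)`: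
there is `S ∈ Sp(2n,ℝ)` with `S γ Sᵀ = diag(d₁,d₁,…,d_n,d_n)`. -/
def HasSympEigenvalues {n : ℕ} (γ : Matrix (Fin (2*n)) (Fin (2*n)) ℝ)
    (d : Fin n → ℝ) : Prop :=
  ∃ S : Matrix (Fin (2*n)) (Fin (2*n)) ℝ,
    IsSymplectic S ∧ S * γ * S.transpose = sympDiag d

/-- Index `2j` in `Fin (2n)` (row/column of the first entry of mode `j`). -/
def modeIdx1 {n : ℕ} (j : Fin n) : Fin (2*n) :=
  ⟨2 * j.val, by have := j.isLt; omega⟩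

/-- Index `2j+1` in `Fin (2n)` (row/column of the second entry of mode `j`). -/
def modeIdx2 {n : ℕ} (j : Fin n) : Fin (2*n) :=
  ⟨2 * j.val + 1, by have := j.isLt; omega⟩

/-- The `j`-th symplectic main diagonal element of `γ`:
the symplectic eigenvalue of the `j`-th `2×2` main diagonal block,
`c_j = (γ_{2j-1,2j-1} γ_{2j,2j} - γ_{2j-1,2j}²)^{1/2}`. -/
noncomputable def sympMainDiag {n : ℕ} (γ : Matrix (Fin (2*n)) (Fin (2*n)) ℝ)
    (j : Fin n) : ℝ :=
  Real.sqrt (γ (modeIdx1 j) (modeIdx1 j) * γ (modeIdx2 j) (modeIdx2 j)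
    - (γ (modeIdx1 j) (modeIdx2 j))^2)

/-- `γ` is a covariance matrix of `n` modes: the complex Hermitian matrix
`γ + iσ` is positive semidefinite. -/
def IsCovarianceMatrix {n : ℕ} (γ : Matrix (Fin (2*n)) (Fin (2*n)) ℝ) : Prop :=
  (γ.map (fun x => (x : ℂ)) + Complex.I • (OmegaMat n).map (fun x => (x : ℂ))).PosSemidef

/-- `γ` is the covariance matrix of a pure Gaussian state of `n` modes:
`γ = S Sᵀ` for some `S ∈ Sp(2n,ℝ)`. -/
def IsPureCovarianceMatrix {n : ℕ} (γ : Matrix (Fin (2*n)) (Fin (2*n)) ℝ) : Prop :=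
  ∃ S : Matrix (Fin (2*n)) (Fin (2*n)) ℝ, IsSymplectic S ∧ γ = S * S.transpose

section Aux
variable {n : ℕ}

lemma omega_rowA (k : Fin n) (d : Fin (2*n)) :
    OmegaMat n (modeIdx1 k) d = if d = modeIdx2 k then 1 else 0 := by
  rcases d with ⟨dv, hd⟩
  unfold OmegaMat modeIdx1 modeIdx2
  by_cases h : dv = 2 * k.val + 1
  · rw [if_pos (by dsimp only; omega), if_pos (Fin.ext h)]
  · rw [if_neg (by dsimp only; omega), if_neg (by dsimp only; omega),
      if_neg (fun hh => h (congrArg Fin.val hh))]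

lemma omega_rowB (k : Fin n) (d : Fin (2*n)) :
    OmegaMat n (modeIdx2 k) d = if d = modeIdx1 k then -1 else 0 := by
  rcases d with ⟨dv, hd⟩
  unfold OmegaMat modeIdx1 modeIdx2
  by_cases h : dv = 2 * k.val
  · rw [if_neg (by dsimp only; omega), if_pos (by dsimp only; omega), if_pos (Fin.ext h)]
  · rw [if_neg (by dsimp only; omega), if_neg (by dsimp only; omega),
      if_neg (fun hh => h (congrArg Fin.val hh))]

lemma omega_sumA (k : Fin n) (w : Fin (2*n) → ℝ) :
    ∑ d, OmegaMat n (modeIdx1 k) d * w d = w (modeIdx2 k) := by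
  simp only [omega_rowA]
  rw [Finset.sum_eq_single (modeIdx2 k)]
  · simp
  · intro d _ hne; simp [hne]
  · simp

lemma omega_sumB (k : Fin n) (w : Fin (2*n) → ℝ) :
    ∑ d, OmegaMat n (modeIdx2 k) d * w d = -w (modeIdx1 k) := by
  simp only [omega_rowB]
  rw [Finset.sum_eq_single (modeIdx1 k)]
  · simp
  · intro d _ hne; simp [hne]
  · simp

def modeEquiv (n : ℕ) : Fin n × Fin 2 ≃ Fin (2*n) where
  toFun p := ⟨2 * p.1.val + p.2.val, by have := p.1.isLt; have := p.2.isLt; omega⟩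
  invFun i := (⟨i.val / 2, by have := i.isLt; omega⟩, ⟨i.val % 2, by omega⟩)
  left_inv p := by
    rcases p with ⟨⟨a, ha⟩, ⟨b, hb⟩⟩
    simp only [Prod.mk.injEq, Fin.mk.injEq]
    omega
  right_inv i := by
    rcases i with ⟨v, hv⟩
    simp only [Fin.mk.injEq]
    omega

lemma sum_split (f : Fin (2*n) → ℝ) :
    ∑ i, f i = ∑ k : Fin n, (f (modeIdx1 k) + f (modeIdx2 k)) := by
  rw [← Equiv.sum_comp (modeEquiv n) f, Fintype.sum_prod_type]
  refine Finset.sum_congr rfl fun k _ => ?_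
  rw [Fin.sum_univ_two]
  congr 1

end Aux

section Aux2
variable {n : ℕ}

lemma mode1_ne_mode2 (k l : Fin n) : modeIdx1 k ≠ modeIdx2 l := by
  simp only [modeIdx1, modeIdx2, ne_eq, Fin.mk.injEq]; omega

lemma mode1_inj {k l : Fin n} (h : modeIdx1 k = modeIdx1 l) : k = l := by
  simp only [modeIdx1, Fin.mk.injEq] at h; exact Fin.ext (by omega)

lemma mode2_inj {k l : Fin n} (h : modeIdx2 k = modeIdx2 l) : k = l := by
  simp only [modeIdx2, Fin.mk.injEq] at h; exact Fin.ext (by omega)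

lemma omega_11 (k l : Fin n) : OmegaMat n (modeIdx1 k) (modeIdx1 l) = 0 := by
  rw [omega_rowA, if_neg (mode1_ne_mode2 l k)]

lemma omega_22 (k l : Fin n) : OmegaMat n (modeIdx2 k) (modeIdx2 l) = 0 := by
  rw [omega_rowB, if_neg (Ne.symm (mode1_ne_mode2 k l))]

lemma omega_12 (k l : Fin n) :
    OmegaMat n (modeIdx1 k) (modeIdx2 l) = if k = l then 1 else 0 := by
  rw [omega_rowA]
  by_cases h : k = l
  · subst h; simp
  · rw [if_neg (fun hh => h (mode2_inj hh).symm), if_neg h]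

lemma omega_21 (k l : Fin n) :
    OmegaMat n (modeIdx2 k) (modeIdx1 l) = if k = l then -1 else 0 := by
  rw [omega_rowB]
  by_cases h : k = l
  · subst h; simp
  · rw [if_neg (fun hh => h (mode1_inj hh).symm), if_neg h]

lemma mode_cases (i : Fin (2*n)) :
    (∃ k, i = modeIdx1 k) ∨ (∃ k, i = modeIdx2 k) := by
  rcases i with ⟨v, hv⟩
  by_cases h : v % 2 = 0
  · exact Or.inl ⟨⟨v / 2, by omega⟩, by apply Fin.ext; show v = 2 * (v/2); omega⟩
  · exact Or.inr ⟨⟨v / 2, by omega⟩, by apply Fin.ext; show v = 2 * (v/2) + 1; omega⟩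

lemma omega_sq : OmegaMat n * OmegaMat n = -1 := by
  ext i c
  rw [Matrix.mul_apply]
  rcases mode_cases i with ⟨k, rfl⟩ | ⟨k, rfl⟩
  · rw [omega_sumA k (fun d => OmegaMat n d c), omega_rowB]
    simp only [Matrix.neg_apply, Matrix.one_apply]
    by_cases h : c = modeIdx1 k
    · subst h; simp
    · rw [if_neg h, if_neg (fun hh : modeIdx1 k = c => h hh.symm)]; try simp
  · rw [omega_sumB k (fun d => OmegaMat n d c), omega_rowA]
    simp only [Matrix.neg_apply, Matrix.one_apply]
    by_cases h : c = modeIdx2 k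
    · subst h; simp
    · rw [if_neg h, if_neg (fun hh : modeIdx2 k = c => h hh.symm)]; try simp

end Aux2

section Scalar

lemma quad_ineq (A B C : ℝ) (h : ∀ t : ℝ, 0 ≤ A * (t * t) + (2 * B) * t + C) :
    B ^ 2 ≤ A * C := by
  have hd := discrim_le_zero h
  unfold discrim at hd
  nlinarith [hd]

lemma scalar_key (bj bk p q r s : ℝ) (hbj : 0 ≤ bj) (hbk : 0 ≤ bk)
    (h : ∀ a c d : ℝ,
      0 ≤ 2*bk*(a*a) + (2*bj+4)*(c*c+d*d) + 2*a*(c*(p-s)+d*(q+r))) :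
    -((bj+2)*bk) ≤ p*s - q*r := by
  have h1 : ((p-s)*(p-s) + (q+r)*(q+r))^2
      ≤ (2*bk) * ((2*bj+4)*((p-s)*(p-s) + (q+r)*(q+r))) := by
    refine quad_ineq _ _ _ fun t => ?_
    nlinarith [h t (p-s) (q+r)]
  have hT0 : 0 ≤ (p-s)*(p-s) + (q+r)*(q+r) := by
    nlinarith [sq_nonneg (p-s), sq_nonneg (q+r)]
  rcases eq_or_lt_of_le hT0 with hz | hpos
  · nlinarith [sq_nonneg (p+s), sq_nonneg (q-r), mul_nonneg hbj hbk, hz]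
  · have hc : (p-s)*(p-s) + (q+r)*(q+r) ≤ 2*bk*(2*bj+4) :=
      le_of_mul_le_mul_right (by nlinarith [h1]) hpos
    nlinarith [sq_nonneg (p+s), sq_nonneg (q-r), hc]

end Scalar

/-- **Corollary 3 (Necessary conditions for pure states).** If `γ` is a pure
covariance matrix of `n` modes whose `2×2` main diagonal blocks are
`(b_k+1)·I₂` with `b_k ≥ 0`, then `b_j ≤ ∑_{k≠j} b_k` for every `j`. -/
theorem pure_state_necessary_conditions (n : ℕ)
    (γ : Matrix (Fin (2*n)) (Fin (2*n)) ℝ) (hγ : IsPureCovarianceMatrix γ)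
    (b : Fin n → ℝ) (hb : ∀ k, 0 ≤ b k)
    (hblock : ∀ k : Fin n,
      γ (modeIdx1 k) (modeIdx1 k) = b k + 1 ∧
      γ (modeIdx2 k) (modeIdx2 k) = b k + 1 ∧
      γ (modeIdx1 k) (modeIdx2 k) = 0 ∧
      γ (modeIdx2 k) (modeIdx1 k) = 0) :
    ∀ j : Fin n, b j ≤ ∑ k ∈ univ.erase j, b k := by
  intro j
  obtain ⟨S, hS, hγS⟩ := hγ
  unfold IsSymplectic at hS
  -- symmetry of γ
  have hsym : ∀ a c, γ a c = γ c a := by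
    intro a c
    have h : γ.transpose = γ := by
      rw [hγS, Matrix.transpose_mul, Matrix.transpose_transpose]
    exact congrFun (congrFun h c) a
  -- Sᵀ Ω S = Ω
  have h1 : S * (OmegaMat n * (S.transpose * (-(OmegaMat n)))) = 1 := by
    have e : S * (OmegaMat n * (S.transpose * (-(OmegaMat n))))
        = (S * OmegaMat n * S.transpose) * (-(OmegaMat n)) := by
      simp only [Matrix.mul_assoc]
    rw [e, hS, Matrix.mul_neg, omega_sq, neg_neg]
  have h2 : (OmegaMat n * (S.transpose * (-(OmegaMat n)))) * S = 1 :=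
    mul_eq_one_comm.mp h1
  have hST : S.transpose * OmegaMat n * S = OmegaMat n := by
    have h3 : (-(OmegaMat n)) * ((OmegaMat n * (S.transpose * (-(OmegaMat n)))) * S)
        = -(OmegaMat n) := by rw [h2, Matrix.mul_one]
    have h4 : (-(OmegaMat n)) * ((OmegaMat n * (S.transpose * (-(OmegaMat n)))) * S)
        = ((-(OmegaMat n)) * OmegaMat n) * (S.transpose * ((-(OmegaMat n)) * S)) := by
      simp only [Matrix.mul_assoc]
    have h5 : (-(OmegaMat n)) * OmegaMat n = 1 := by
      rw [Matrix.neg_mul, omega_sq, neg_neg]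
    rw [h4, h5, Matrix.one_mul] at h3
    have h6 : S.transpose * ((-(OmegaMat n)) * S)
        = -(S.transpose * OmegaMat n * S) := by
      simp only [Matrix.neg_mul, Matrix.mul_neg, Matrix.mul_assoc]
    rw [h6] at h3
    exact neg_injective h3
  -- purity: γ Ω γ = Ω
  have hpure : γ * OmegaMat n * γ = OmegaMat n := by
    rw [hγS]
    have e : S * S.transpose * OmegaMat n * (S * S.transpose)
        = S * ((S.transpose * OmegaMat n * S) * S.transpose) := by
      simp only [Matrix.mul_assoc]
    rw [e, hST, ← Matrix.mul_assoc, hS]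
  -- the key identity
  have hx : (γ * (OmegaMat n * γ)) (modeIdx1 j) (modeIdx2 j)
      = ∑ k : Fin n, (γ (modeIdx1 j) (modeIdx1 k) * γ (modeIdx2 k) (modeIdx2 j)
        - γ (modeIdx1 j) (modeIdx2 k) * γ (modeIdx1 k) (modeIdx2 j)) := by
    rw [Matrix.mul_apply]
    rw [sum_split (fun c => γ (modeIdx1 j) c * (OmegaMat n * γ) c (modeIdx2 j))]
    refine Finset.sum_congr rfl fun k _ => ?_
    rw [Matrix.mul_apply, Matrix.mul_apply,
      omega_sumA k (fun d => γ d (modeIdx2 j)), omega_sumB k (fun d => γ d (modeIdx2 j))]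
    ring
  have hkey : ∑ k : Fin n, (γ (modeIdx1 j) (modeIdx1 k) * γ (modeIdx2 k) (modeIdx2 j)
      - γ (modeIdx1 j) (modeIdx2 k) * γ (modeIdx1 k) (modeIdx2 j)) = 1 := by
    rw [← hx, ← Matrix.mul_assoc, hpure, omega_12, if_pos rfl]
  -- positivity of the quadratic form
  have hQ : ∀ x y : Fin (2*n) → ℝ,
      0 ≤ x ⬝ᵥ (γ *ᵥ x) + y ⬝ᵥ (γ *ᵥ y) - 2 * (x ⬝ᵥ (OmegaMat n *ᵥ y)) := by
    intro x y
    have e1 : ∀ z w : Fin (2*n) → ℝ, z ⬝ᵥ (γ *ᵥ w) = (Sᵀ *ᵥ z) ⬝ᵥ (Sᵀ *ᵥ w) := by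
      intro z w
      rw [hγS, ← Matrix.mulVec_mulVec, Matrix.dotProduct_mulVec, ← Matrix.mulVec_transpose]
    have e2 : x ⬝ᵥ (OmegaMat n *ᵥ y) = (Sᵀ *ᵥ x) ⬝ᵥ (OmegaMat n *ᵥ (Sᵀ *ᵥ y)) := by
      conv_lhs => rw [← hS]
      rw [← Matrix.mulVec_mulVec, ← Matrix.mulVec_mulVec, Matrix.dotProduct_mulVec,
        ← Matrix.mulVec_transpose]
    rw [e1 x x, e1 y y, e2]
    set x' := Sᵀ *ᵥ x with hx'
    set y' := Sᵀ *ᵥ y with hy'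
    set w := OmegaMat n *ᵥ y' with hw
    have hww : w ⬝ᵥ w = y' ⬝ᵥ y' := by
      show ∑ i, w i * w i = ∑ i, y' i * y' i
      rw [sum_split (fun i => w i * w i), sum_split (fun i => y' i * y' i)]
      refine Finset.sum_congr rfl fun k _ => ?_
      have hA : w (modeIdx1 k) = y' (modeIdx2 k) := by
        show (OmegaMat n *ᵥ y') (modeIdx1 k) = _
        simp only [Matrix.mulVec, dotProduct]
        exact omega_sumA k y'
      have hB : w (modeIdx2 k) = -(y' (modeIdx1 k)) := by
        show (OmegaMat n *ᵥ y') (modeIdx2 k) = _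
        simp only [Matrix.mulVec, dotProduct]
        exact omega_sumB k y'
      rw [hA, hB]; ring
    have hsq : 0 ≤ (x' - w) ⬝ᵥ (x' - w) := by
      simp only [dotProduct]
      exact Finset.sum_nonneg fun i _ => mul_self_nonneg _
    have hexp : (x' - w) ⬝ᵥ (x' - w) = x' ⬝ᵥ x' - 2 * (x' ⬝ᵥ w) + w ⬝ᵥ w := by
      rw [sub_dotProduct, dotProduct_sub, dotProduct_sub,
        dotProduct_comm w x']
      ring
    rw [hexp] at hsq
    linarith [hww, hsq]
  -- per-mode bound
  have hbound : ∀ k : Fin n, k ≠ j →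
      -((b j + 2) * b k) ≤ γ (modeIdx1 j) (modeIdx1 k) * γ (modeIdx2 k) (modeIdx2 j)
        - γ (modeIdx1 j) (modeIdx2 k) * γ (modeIdx1 k) (modeIdx2 j) := by
    intro k hkj
    obtain ⟨hb1j, hb2j, hb3j, hb4j⟩ := hblock j
    obtain ⟨hb1k, hb2k, hb3k, hb4k⟩ := hblock k
    rw [hsym (modeIdx2 k) (modeIdx2 j), hsym (modeIdx1 k) (modeIdx2 j)]
    refine scalar_key (b j) (b k) _ _ _ _ (hb j) (hb k) fun a c d => ?_
    have H := hQ (Pi.single (modeIdx1 k) a + (Pi.single (modeIdx1 j) c + Pi.single (modeIdx2 j) d))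
                (Pi.single (modeIdx2 k) a + (Pi.single (modeIdx2 j) (-c) + Pi.single (modeIdx1 j) d))
    simp only [Matrix.mulVec_add, Matrix.mulVec_single, dotProduct_add,
      add_dotProduct, single_dotProduct, Pi.add_apply, Pi.smul_apply, op_smul_eq_mul,
      Matrix.col_apply] at H
    rw [hsym (modeIdx1 k) (modeIdx1 j), hsym (modeIdx2 k) (modeIdx1 j),
      hsym (modeIdx1 k) (modeIdx2 j), hsym (modeIdx2 k) (modeIdx2 j)] at H
    rw [hb1j, hb2j, hb3j, hb4j, hb1k, hb2k] at H
    have hjk : ¬ (k = j) := hkj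
    have hjk' : ¬ (j = k) := fun h => hkj h.symm
    rw [omega_12 k k, omega_12 j k, omega_22 j k, omega_12 k j, omega_12 j j,
      omega_22 j j, omega_11 k j, omega_11 j j, omega_21 j j] at H
    simp only [if_pos rfl, if_neg hjk, if_neg hjk', if_true] at H
    nlinarith [H]
  -- assemble
  have hat_j : γ (modeIdx1 j) (modeIdx1 j) * γ (modeIdx2 j) (modeIdx2 j)
      - γ (modeIdx1 j) (modeIdx2 j) * γ (modeIdx1 j) (modeIdx2 j)
      = (b j + 1) * (b j + 1) := by
    obtain ⟨hb1j, hb2j, hb3j, hb4j⟩ := hblock j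
    rw [hb1j, hb2j, hb3j]; ring
  have hsplit : (γ (modeIdx1 j) (modeIdx1 j) * γ (modeIdx2 j) (modeIdx2 j)
      - γ (modeIdx1 j) (modeIdx2 j) * γ (modeIdx1 j) (modeIdx2 j))
      + ∑ k ∈ univ.erase j, (γ (modeIdx1 j) (modeIdx1 k) * γ (modeIdx2 k) (modeIdx2 j)
        - γ (modeIdx1 j) (modeIdx2 k) * γ (modeIdx1 k) (modeIdx2 j)) = 1 := by
    rw [← hkey]
    exact Finset.add_sum_erase univ
      (fun k => γ (modeIdx1 j) (modeIdx1 k) * γ (modeIdx2 k) (modeIdx2 j)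
        - γ (modeIdx1 j) (modeIdx2 k) * γ (modeIdx1 k) (modeIdx2 j)) (Finset.mem_univ j)
  have hsum_lb : ∑ k ∈ univ.erase j, (-((b j + 2) * b k))
      ≤ ∑ k ∈ univ.erase j, (γ (modeIdx1 j) (modeIdx1 k) * γ (modeIdx2 k) (modeIdx2 j)
        - γ (modeIdx1 j) (modeIdx2 k) * γ (modeIdx1 k) (modeIdx2 j)) :=
    Finset.sum_le_sum fun k hk => hbound k (Finset.mem_erase.mp hk).1
  have hneg : ∑ k ∈ univ.erase j, (-((b j + 2) * b k))
      = -((b j + 2) * ∑ k ∈ univ.erase j, b k) := by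
    rw [Finset.mul_sum, Finset.sum_neg_distrib]
  rw [hneg] at hsum_lb
  have hj0 := hb j
  have hsj : γ (modeIdx1 j) (modeIdx2 j) = γ (modeIdx2 j) (modeIdx1 j) := hsym _ _
  -- from hsplit : term_j + rest = 1, hat_j : term_j' = (bj+1)^2
  nlinarith [hsplit, hat_j, hsum_lb, hsj]
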